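/- arXiv:2303.01602 — 3 statements merged into one kernel-verified Lean document; each statement's English description precedes it below -/
import Mathlib

section
/- Let n be a positive integer and for each i = 1,…,n let m_i, p_a, p_b be positive integers, Zᵃᵢ an m_i × p_a real matrix, Zᵇᵢ an m_i × p_b real matrix with (Zᵇᵢ)ᵀZᵇᵢ invertible, Mᵢ = (1_{m_i}, Zᵇᵢ) with MᵢᵀMᵢ invertible, Δᵢ ∈ {0,1}, and Yᵢ, ζᵢ, ζ̂ᵢ ∈ ℝ^{m_i}. Fix k ∈ {1,…,p_a}. Suppose that for every i with Δᵢ = 1 the k-th column of Zᵃᵢ lies in the column space of Zᵇᵢ, and for every i with Δᵢ = 0 the k-th column of Zᵃᵢ lies in the column space of Mᵢ. Then the k-th component of Σ_{i=1}^n [ Δᵢ (Zᵃᵢ)ᵀ(I_{m_i} − P_{Zᵇᵢ})(Yᵢ − ζᵢ) + (1−Δᵢ) (Zᵃᵢ)ᵀ(I_{m_i} − P_{Mᵢ})(Yᵢ − ζ̂ᵢ) ] equals 0, regardless of Yᵢ, ζᵢ, ζ̂ᵢ. Consequently the k-th element of the total estimating equation is identically 0. (Proposition on the limitation of the total estimating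 equation.) -/
open Matrix

/-- Projection matrix `P_M = M (Mᵀ M)⁻¹ Mᵀ`. -/
noncomputable def projMat {m p : ℕ} (M : Matrix (Fin m) (Fin p) ℝ) :
    Matrix (Fin m) (Fin m) ℝ :=
  M * (Mᵀ * M)⁻¹ * Mᵀ

/-- `(1_m, Zᵇ)`: the matrix obtained by prepending a column of ones to `Zᵇ`. -/
def onesAug {m pb : ℕ} (Zb : Matrix (Fin m) (Fin pb) ℝ) :
    Matrix (Fin m) (Fin (pb + 1)) ℝ :=
  Matrix.of fun r => Fin.cons 1 (Zb r)

lemma key {m p : ℕ} (M : Matrix (Fin m) (Fin p) ℝ) (h : IsUnit (Mᵀ * M).det)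
    (c : Fin m → ℝ) (hc : c ∈ Submodule.span ℝ (Set.range Mᵀ))
    (w : Fin m → ℝ) :
    c ⬝ᵥ (((1 : Matrix (Fin m) (Fin m) ℝ) - projMat M) *ᵥ w) = 0 := by
  obtain ⟨a, ha⟩ := Submodule.mem_span_range_iff_exists_fun ℝ |>.mp hc
  have hcM : c = M *ᵥ a := by
    funext r
    rw [← ha]
    simp [mulVec, dotProduct, Finset.sum_apply, mul_comm]
  have hPM : projMat M * M = M := by
    rw [projMat, Matrix.mul_assoc, Matrix.mul_assoc, Matrix.nonsing_inv_mul _ h,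
      Matrix.mul_one]
  have hPc : ((1 : Matrix (Fin m) (Fin m) ℝ) - projMat M) *ᵥ c = 0 := by
    rw [hcM, mulVec_mulVec, Matrix.sub_mul, Matrix.one_mul, hPM, sub_self, zero_mulVec]
  have hsym : ((1 : Matrix (Fin m) (Fin m) ℝ) - projMat M)ᵀ = 1 - projMat M := by
    rw [transpose_sub, transpose_one]
    congr 1
    rw [projMat, transpose_mul, transpose_mul, transpose_nonsing_inv, transpose_mul,
      transpose_transpose, Matrix.mul_assoc]
  rw [dotProduct_mulVec, ← mulVec_transpose, hsym, hPc, zero_dotProduct]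

/-- if for every uncensored subject the `k`-th column of `Zᵃᵢ` lies in the
column space of `Zᵇᵢ`, and for every censored subject it lies in the column space of
`Mᵢ = (1_{m_i}, Zᵇᵢ)`, then the `k`-th component of the total estimating equation
`Σᵢ [Δᵢ (Zᵃᵢ)ᵀ(I - P_{Zᵇᵢ})(Yᵢ - ζᵢ) + (1-Δᵢ)(Zᵃᵢ)ᵀ(I - P_{Mᵢ})(Yᵢ - ζ̂ᵢ)]`
is identically `0`. -/
theorem stmt10 (n : ℕ) (hn : 0 < n) (pa pb : ℕ) (hpa : 0 < pa) (hpb : 0 < pb)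
    (m : Fin n → ℕ) (hm : ∀ i, 0 < m i)
    (Za : ∀ i, Matrix (Fin (m i)) (Fin pa) ℝ)
    (Zb : ∀ i, Matrix (Fin (m i)) (Fin pb) ℝ)
    (hZb : ∀ i, IsUnit ((Zb i)ᵀ * Zb i).det)
    (hMi : ∀ i, IsUnit ((onesAug (Zb i))ᵀ * onesAug (Zb i)).det)
    (Δ : Fin n → ℝ) (hΔ : ∀ i, Δ i = 0 ∨ Δ i = 1)
    (k : Fin pa)
    (hcol1 : ∀ i, Δ i = 1 →
      (fun r => Za i r k) ∈ Submodule.span ℝ (Set.range (Zb i)ᵀ))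
    (hcol0 : ∀ i, Δ i = 0 →
      (fun r => Za i r k) ∈ Submodule.span ℝ (Set.range (onesAug (Zb i))ᵀ))
    (Y ζ ζhat : ∀ i, Fin (m i) → ℝ) :
    (∑ i, (Δ i • ((Za i)ᵀ *ᵥ
            (((1 : Matrix (Fin (m i)) (Fin (m i)) ℝ) - projMat (Zb i)) *ᵥ (Y i - ζ i)))
        + (1 - Δ i) • ((Za i)ᵀ *ᵥ
            (((1 : Matrix (Fin (m i)) (Fin (m i)) ℝ) - projMat (onesAug (Zb i))) *ᵥ
              (Y i - ζhat i))))) k = 0 := by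
  rw [Finset.sum_apply]
  apply Finset.sum_eq_zero
  intro i _
  rcases hΔ i with h0 | h1
  · simp only [h0, zero_smul, sub_zero, one_smul, zero_add, Pi.add_apply, Pi.zero_apply]
    exact key (onesAug (Zb i)) (hMi i) _ (hcol0 i h0) (Y i - ζhat i)
  · simp only [h1, one_smul, sub_self, zero_smul, add_zero, Pi.add_apply, Pi.zero_apply]
    exact key (Zb i) (hZb i) _ (hcol1 i h1) (Y i - ζ i)
end

section
/- Let (Ω, F, μ) be a probability space with Ω a standard Borel space, let G be a sub-σ-algebra of F, let C : Ω → E be a measurable random variable, and set H = G ⊔ σ(C). Let Y : Ω → ℝᵐ be a random vector with each component integrable, and suppose σ(Y) and σ(C) are conditionally independent given G. Then for any bounded, H-measurable random matrix A : Ω → ℝ^{q×m} (each entry bounded and H-measurable), E[ A·(Y − E[Y | G]) ] = 0, where E[Y | G] denotes the componentwise conditional expectation. In particular, taking A = Δ·σ⁻²(Zᵃ)ᵀ(I_m − P_{Zᵇ}) with Δ = 1{X ≤ C}, the β- and α-components of the efficient score for uncensored subjects have mean zero. (Proposition: unbiasedness of the regression components of the efficient score function under the conditional independence assumption.) -/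
open MeasureTheory ProbabilityTheory Matrix

lemma stmt12_aux_set {Ω E : Type*} (G : MeasurableSpace Ω) [mΩ : MeasurableSpace Ω]
    [StandardBorelSpace Ω] [MeasurableSpace E] (μ : Measure Ω) [IsProbabilityMeasure μ]
    (hG : G ≤ mΩ) (C : Ω → E) (hC : Measurable C) (f : Ω → ℝ) (hf : Measurable f)
    (hfint : Integrable f μ) (hCI : CondIndepFun G hG f C μ) (g : Set Ω) (hg : MeasurableSet[G] g)
    (t : Set E) (ht : MeasurableSet t) :
    ∫ ω in g ∩ C ⁻¹' t, f ω ∂μ = ∫ ω in g ∩ C ⁻¹' t, (μ[f | G]) ω ∂μ := by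
  set κ := condExpKernel μ G with hκ
  have hI := (condIndepFun_iff_compProd_map_prod_eq_compProd_prod_map_map hf hC).1 hCI
  have hdiag : @Measurable Ω (Ω × Ω) mΩ (G.prod mΩ) Function.diag :=
    (measurable_id.mono le_rfl hG).prodMk measurable_id
  have hpm : @Measurable (Ω × Ω) (Ω × ℝ × E) (G.prod mΩ) (G.prod inferInstance)
      (Prod.map id (fun ω => (f ω, C ω))) := by
    exact measurable_fst.prodMk ((hf.prodMk hC).comp measurable_snd)
  have hmap : μ.trim hG ⊗ₘ κ.map (fun ω => (f ω, C ω))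
      = @Measure.map Ω (Ω × ℝ × E) mΩ (G.prod inferInstance) (fun ω => (ω, f ω, C ω)) μ := by
    rw [Measure.compProd_map (hf.prodMk hC), compProd_trim_condExpKernel hG,
      Measure.map_map hpm hdiag]
    rfl
  let F : Ω × ℝ × E → ℝ := fun p =>
    g.indicator (fun _ => (1:ℝ)) p.1 * (p.2.1 * t.indicator (fun _ => (1:ℝ)) p.2.2)
  have hFm : @Measurable (Ω × ℝ × E) ℝ (G.prod inferInstance) _ F := by
    exact ((measurable_const.indicator hg).comp measurable_fst).mul
      (measurable_snd.fst.mul ((measurable_const.indicator ht).comp measurable_snd.snd))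
  have hcomp : (fun ω => F (ω, f ω, C ω)) = (g ∩ C ⁻¹' t).indicator f := by
    funext ω
    by_cases h1 : ω ∈ g <;> by_cases h2 : C ω ∈ t <;> simp [F, Set.indicator, h1, h2]
  have hFint_map : Integrable F
      (@Measure.map Ω (Ω × ℝ × E) mΩ (G.prod inferInstance) (fun ω => (ω, f ω, C ω)) μ) := by
    letI : MeasurableSpace (Ω × ℝ × E) := G.prod inferInstance
    have hφ : AEMeasurable (fun ω => (ω, f ω, C ω)) μ := (hpm.comp hdiag).aemeasurable
    rw [integrable_map_measure hFm.aestronglyMeasurable hφ]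
    change Integrable (fun ω => F (ω, f ω, C ω)) μ
    rw [hcomp]
    exact hfint.indicator ((hG g hg).inter (hC ht))
  have hLHS : ∫ p, F p ∂(@Measure.map Ω (Ω × ℝ × E) mΩ (G.prod inferInstance)
      (fun ω => (ω, f ω, C ω)) μ) = ∫ ω in g ∩ C ⁻¹' t, f ω ∂μ := by
    letI : MeasurableSpace (Ω × ℝ × E) := G.prod inferInstance
    have hφ : AEMeasurable (fun ω => (ω, f ω, C ω)) μ := (hpm.comp hdiag).aemeasurable
    rw [integral_map hφ hFm.aestronglyMeasurable, hcomp,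
      integral_indicator ((hG g hg).inter (hC ht))]
  rw [← hLHS, ← hmap, hI]
  have hFint : Integrable F (μ.trim hG ⊗ₘ (κ.map f ×ₖ κ.map C)) := by
    rw [← hI, hmap]; exact hFint_map
  rw [Measure.integral_compProd hFint]
  have hinner : ∀ ω, ∫ b, F (ω, b) ∂((κ.map f ×ₖ κ.map C) ω)
      = g.indicator (fun _ => (1:ℝ)) ω * ((∫ y, f y ∂κ ω) * (κ ω).real (C ⁻¹' t)) := by
    intro ω
    rw [Kernel.prod_apply, Kernel.map_apply _ hf, Kernel.map_apply _ hC]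
    simp only [F]
    rw [integral_const_mul,
      integral_prod_mul (fun x : ℝ => x) (fun c => t.indicator (fun _ => (1:ℝ)) c),
      integral_map (f := fun x : ℝ => x) hf.aemeasurable aestronglyMeasurable_id,
      integral_map hC.aemeasurable (measurable_const.indicator ht).aestronglyMeasurable]
    rw [show (fun x => t.indicator (fun _ => (1:ℝ)) (C x)) = (C ⁻¹' t).indicator 1 from ?_,
      integral_indicator_one (hC ht)]
    funext x
    by_cases h : C x ∈ t <;> simp [Set.indicator, h]
  rw [show (fun ω => ∫ b, F (ω, b) ∂((κ.map f ×ₖ κ.map C) ω)) = _ from funext hinner]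
  have hsm : StronglyMeasurable[G] (fun ω => g.indicator (fun _ => (1:ℝ)) ω *
      ((∫ y, f y ∂κ ω) * (κ ω).real (C ⁻¹' t))) := by
    refine (measurable_const.indicator hg).stronglyMeasurable.mul
      ((hf.stronglyMeasurable.integral_condExpKernel).mul ?_)
    exact (measurable_condExpKernel (hC ht)).ennreal_toReal.stronglyMeasurable
  rw [← integral_trim hG hsm]
  have h1 := condExp_ae_eq_integral_condExpKernel hG hfint
  have h2 := condExpKernel_ae_eq_condExp hG (μ := μ) (hC ht)
  have hint1 : Integrable ((C ⁻¹' t).indicator (fun _ => (1:ℝ))) μ :=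
    (integrable_const 1).indicator (hC ht)
  have heq : (C ⁻¹' t).indicator (μ[f | G])
      = μ[f | G] * (C ⁻¹' t).indicator (fun _ => (1:ℝ)) := by
    funext x
    by_cases h : C x ∈ t <;> simp [Set.indicator, h]
  have hint2 : Integrable (μ[f | G] * (C ⁻¹' t).indicator (fun _ => (1:ℝ))) μ := by
    rw [← heq]; exact integrable_condExp.indicator (hC ht)
  have hmul := condExp_mul_of_stronglyMeasurable_left (m := G) (μ := μ)
    (stronglyMeasurable_condExp (f := f) (m := G) (μ := μ)) hint2 hint1
  have hRHS : ∫ ω in g ∩ C ⁻¹' t, (μ[f | G]) ω ∂μ = ∫ ω, g.indicator (fun _ => (1:ℝ)) ω *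
      ((μ[f | G]) ω * (μ[(C ⁻¹' t).indicator (fun _ => (1:ℝ)) | G]) ω) ∂μ := by
    rw [← setIntegral_indicator (hC ht), heq, ← setIntegral_condExp hG hint2 hg,
      setIntegral_congr_ae (hG g hg) (hmul.mono fun x hx _ => hx),
      ← integral_indicator (hG g hg)]
    refine integral_congr_ae (ae_of_all _ fun x => ?_)
    by_cases h : x ∈ g <;> simp [Set.indicator, h]
  rw [hRHS]
  refine integral_congr_ae ?_
  filter_upwards [h1, h2] with ω h1ω h2ω
  rw [h1ω, ← h2ω]

lemma stmt12_aux_condExp {Ω E : Type*} (G : MeasurableSpace Ω) [mΩ : MeasurableSpace Ω]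
    [StandardBorelSpace Ω] [MeasurableSpace E] (μ : Measure Ω) [IsProbabilityMeasure μ]
    (hG : G ≤ mΩ) (C : Ω → E) (hC : Measurable C) (f : Ω → ℝ) (hf : Measurable f)
    (hfint : Integrable f μ) (hCI : CondIndepFun G hG f C μ)
    (hHle : G ⊔ MeasurableSpace.comap C inferInstance ≤ mΩ) :
    μ[f | G ⊔ MeasurableSpace.comap C inferInstance] =ᵐ[μ] μ[f | G] := by
  let p : Set (Set Ω) := {s | ∃ a b, MeasurableSet[G] a ∧ MeasurableSet b ∧ s = a ∩ C ⁻¹' b}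
  have hp : IsPiSystem p := by
    rintro _ ⟨a1, b1, ha1, hb1, rfl⟩ _ ⟨a2, b2, ha2, hb2, rfl⟩ -
    exact ⟨a1 ∩ a2, b1 ∩ b2, ha1.inter ha2, hb1.inter hb2, by
      ext x; simp only [Set.mem_inter_iff, Set.mem_preimage]; tauto⟩
  have hgen : (G ⊔ MeasurableSpace.comap C inferInstance) = MeasurableSpace.generateFrom p := by
    apply le_antisymm
    · refine sup_le (fun a ha => ?_) ?_
      · exact MeasurableSpace.measurableSet_generateFrom
          ⟨a, Set.univ, ha, MeasurableSet.univ, by simp⟩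
      · rintro _ ⟨b, hb, rfl⟩
        exact MeasurableSpace.measurableSet_generateFrom
          ⟨Set.univ, b, MeasurableSet.univ, hb, by simp⟩
    · refine MeasurableSpace.generateFrom_le ?_
      rintro _ ⟨a, b, ha, hb, rfl⟩
      exact MeasurableSet.inter ((le_sup_left : G ≤ (G ⊔ MeasurableSpace.comap C inferInstance)) a ha)
        ((le_sup_right : MeasurableSpace.comap C inferInstance ≤ (G ⊔ MeasurableSpace.comap C inferInstance)) _ ⟨b, hb, rfl⟩)
  have hset : ∀ s, MeasurableSet[(G ⊔ MeasurableSpace.comap C inferInstance)] s → ∫ x in s, f x ∂μ = ∫ x in s, (μ[f | G]) x ∂μ := by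
    intro s hs
    refine MeasurableSpace.induction_on_inter
      (C := fun s _ => ∫ x in s, f x ∂μ = ∫ x in s, (μ[f | G]) x ∂μ) hgen hp ?_ ?_ ?_ ?_ s hs
    · simp
    · rintro _ ⟨a, b, ha, hb, rfl⟩
      exact stmt12_aux_set G μ hG C hC f hf hfint hCI a ha b hb
    · intro s hsm ih
      have h1 := integral_add_compl (μ := μ) (hHle s hsm) hfint
      have h2 := integral_add_compl (μ := μ) (hHle s hsm) (integrable_condExp (m := G) (f := f))
      rw [integral_condExp hG] at h2
      linarith
    · intro u hd hum ih
      rw [integral_iUnion (fun i => hHle _ (hum i)) hd hfint.integrableOn,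
        integral_iUnion (fun i => hHle _ (hum i)) hd integrable_condExp.integrableOn]
      exact tsum_congr ih
  exact (ae_eq_condExp_of_forall_setIntegral_eq hHle hfint
    (fun s _ _ => integrable_condExp.integrableOn) (fun s hs _ => (hset s hs).symm)
    ((stronglyMeasurable_condExp.mono (le_sup_left : G ≤ (G ⊔ MeasurableSpace.comap C inferInstance))).aestronglyMeasurable)).symm

/-- on a standard Borel probability space, if `σ(Y)` and `σ(C)` are
conditionally independent given `G`, `Y : Ω → ℝᵐ` has integrable components, and `A` is a
random `q × m` matrix with bounded, `H`-measurable entries where `H = G ⊔ σ(C)`, then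
`E[A (Y - E[Y|G])] = 0` (componentwise). -/
theorem stmt12 {Ω E : Type*} (G : MeasurableSpace Ω) (H : MeasurableSpace Ω) [F : MeasurableSpace Ω] [StandardBorelSpace Ω]
    [MeasurableSpace E]
    (μ : Measure Ω) [IsProbabilityMeasure μ]
    (hG : G ≤ F)
    (C : Ω → E) (hC : Measurable C)
    (hH : H = G ⊔ MeasurableSpace.comap C inferInstance)
    (m q : ℕ)
    (Y : Ω → (Fin m → ℝ)) (hYmeas : Measurable Y)
    (hYint : ∀ j, Integrable (fun ω => Y ω j) μ)
    (hCI : CondIndepFun G hG Y C μ)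
    (A : Ω → Matrix (Fin q) (Fin m) ℝ)
    (hAmeas : ∀ k j, Measurable[H] fun ω => A ω k j)
    (hAbdd : ∃ Cb : ℝ, ∀ ω k j, |A ω k j| ≤ Cb) :
    ∀ k : Fin q,
      ∫ ω, (A ω *ᵥ (Y ω - fun j => (μ[(fun ω' => Y ω' j) | G]) ω)) k ∂μ = 0 := by
  intro k
  have hHle : H ≤ F := by rw [hH]; exact sup_le hG hC.comap_le
  have hGH : G ≤ H := by rw [hH]; exact le_sup_left
  obtain ⟨Cb, hCb⟩ := hAbdd
  -- integrability of each summand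
  have hint : ∀ j : Fin m,
      Integrable (fun ω => A ω k j * (Y ω j - (μ[(fun ω' => Y ω' j) | G]) ω)) μ := by
    intro j
    refine Integrable.bdd_mul (c := Cb) ((hYint j).sub integrable_condExp)
      ((hAmeas k j).mono hHle le_rfl).aestronglyMeasurable (ae_of_all _ fun x => ?_)
    simpa [Real.norm_eq_abs] using hCb x k j
  have hsum : (fun ω => (A ω *ᵥ (Y ω - fun j => (μ[(fun ω' => Y ω' j) | G]) ω)) k)
      = fun ω => ∑ j : Fin m, A ω k j * (Y ω j - (μ[(fun ω' => Y ω' j) | G]) ω) := by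
    funext ω
    simp [Matrix.mulVec, dotProduct, mul_sub, Finset.sum_sub_distrib]
  rw [hsum, integral_finset_sum _ (fun j _ => hint j)]
  refine Finset.sum_eq_zero fun j _ => ?_
  -- each term has zero mean
  set f : Ω → ℝ := fun ω => Y ω j with hfdef
  have hd : Integrable (fun ω => Y ω j - (μ[f|G]) ω) μ := (hYint j).sub integrable_condExp
  have hzero : μ[(fun ω => Y ω j - (μ[f|G]) ω)|H] =ᵐ[μ] 0 := by
    have hCIj : CondIndepFun G hG f C μ := hCI.comp (measurable_pi_apply j) measurable_id
    have hfH : μ[f|H] =ᵐ[μ] μ[f|G] := by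
      subst hH
      exact stmt12_aux_condExp G μ hG C hC f ((measurable_pi_apply j).comp hYmeas) (hYint j)
        hCIj hHle
    have h2 : μ[μ[f|G]|H] = μ[f|G] :=
      condExp_of_stronglyMeasurable hHle (stronglyMeasurable_condExp.mono hGH) integrable_condExp
    have h1 : μ[f - μ[f|G]|H] =ᵐ[μ] μ[f|H] - μ[μ[f|G]|H] :=
      condExp_sub (hYint j) integrable_condExp H
    have h3 : (fun ω => Y ω j - (μ[f|G]) ω) = f - μ[f|G] := rfl
    rw [h3]
    refine h1.trans ?_
    rw [h2]
    filter_upwards [hfH] with x hx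
    simp [hx]
  have hmul : μ[(fun ω => A ω k j * (Y ω j - (μ[f|G]) ω))|H]
      =ᵐ[μ] (fun ω => A ω k j) * μ[(fun ω => Y ω j - (μ[f|G]) ω)|H] :=
    condExp_mul_of_stronglyMeasurable_left (hAmeas k j).stronglyMeasurable (hint j) hd
  have hzero2 : μ[(fun ω => A ω k j * (Y ω j - (μ[f|G]) ω))|H] =ᵐ[μ] 0 := by
    refine hmul.trans ?_
    filter_upwards [hzero] with x hx
    simp only [Pi.mul_apply, hx, Pi.zero_apply, mul_zero]
  calc ∫ ω, A ω k j * (Y ω j - (μ[f|G]) ω) ∂μ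
      = ∫ ω, (μ[(fun ω => A ω k j * (Y ω j - (μ[f|G]) ω))|H]) ω ∂μ :=
        (integral_condExp hHle).symm
    _ = ∫ _ω, (0 : ℝ) ∂μ := integral_congr_ae hzero2
    _ = 0 := integral_zero _ _
end

section
/- Let (Ω, F, μ) be a probability space with Ω a standard Borel space, let G be a sub-σ-algebra of F, let C : Ω → E be a measurable random variable, and set H = G ⊔ σ(C). Let Y : Ω → ℝᵐ be a random vector such that each component of Y and the squared Euclidean norm ‖Y‖² are integrable, and suppose σ(Y) and σ(C) are conditionally independent given G. Then for any bounded G-measurable random vector ζ : Ω → ℝᵐ and any bounded H-measurable random variable Δ : Ω → ℝ, E[ Δ·( ½{‖Y‖² − E[‖Y‖² | G]} − ⟨ζ, Y − E[Y | G]⟩ ) ] = 0. (Proposition: unbiasedness of the σ²-component of the efficient score function under the conditional independence assumption.) -/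
open MeasureTheory ProbabilityTheory Matrix

section Aux

variable {Ω E β : Type*} {G : MeasurableSpace Ω} [F : MeasurableSpace Ω]
  [StandardBorelSpace Ω]
  [MeasurableSpace E] [MeasurableSpace β]
  {μ : Measure Ω} [IsProbabilityMeasure μ]
  {C : Ω → E} {Y : Ω → β}

lemma aux_setIntegral_base (hG : G ≤ F) (hC : Measurable C) (hY : Measurable Y)
    (hCI : CondIndepFun G hG Y C μ)
    {A : Set Ω} (hA : MeasurableSet[G] A) {t : Set E} (ht : MeasurableSet t) :
    ∀ ⦃φ : β → ℝ⦄, Integrable φ (μ.map Y) →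
      ∫ ω in A ∩ C ⁻¹' t, φ (Y ω) ∂μ
        = ∫ ω in A ∩ C ⁻¹' t, (μ[fun ω' => φ (Y ω')|G]) ω ∂μ := by
  haveI : SigmaFinite (μ.trim hG) := inferInstance
  set B : Set Ω := C ⁻¹' t with hBdef
  have hB : MeasurableSet B := hC ht
  have hindB : Integrable (B.indicator fun _ => (1:ℝ)) μ := (integrable_const 1).indicator hB
  have hprod : ∀ {s : Set β}, MeasurableSet s →
      (μ⟦Y ⁻¹' s ∩ B|G⟧) =ᵐ[μ] fun ω => (μ⟦Y ⁻¹' s|G⟧) ω * (μ⟦B|G⟧) ω :=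
    fun hs => (condIndepFun_iff_condExp_inter_preimage_eq_mul hY hC).mp hCI _ _ hs ht
  refine Integrable.induction
    (P := fun φ => ∫ ω in A ∩ B, φ (Y ω) ∂μ
        = ∫ ω in A ∩ B, (μ[fun ω' => φ (Y ω')|G]) ω ∂μ) ?_ ?_ ?_ ?_
  · -- indicator case
    intro c s hs _
    set D : Set Ω := Y ⁻¹' s with hDdef
    have hD : MeasurableSet D := hY hs
    have hcomp : (fun ω => (s.indicator (fun _ => c)) (Y ω)) = D.indicator (fun _ => c) := by
      funext ω
      by_cases hω : ω ∈ D <;> simp [Set.indicator_apply, hDdef, Set.mem_preimage] at hω ⊢ <;>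
        simp [hω]
    have hsmul : ∀ (u : Set Ω), u.indicator (fun _ => c) = c • u.indicator (fun _ => (1:ℝ)) := by
      intro u; funext ω; by_cases hω : ω ∈ u <;> simp [Set.indicator_apply, hω]
    have hindD : Integrable (D.indicator fun _ => (1:ℝ)) μ := (integrable_const 1).indicator hD
    have lhs_eq : ∫ ω in A ∩ B, (s.indicator (fun _ => c)) (Y ω) ∂μ
        = ∫ ω in A, c * ((μ⟦D|G⟧) ω * (μ⟦B|G⟧) ω) ∂μ := by
      have h1 : μ[(B ∩ D).indicator (fun _ => c)|G]
          =ᵐ[μ] fun ω => c * ((μ⟦D|G⟧) ω * (μ⟦B|G⟧) ω) := by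
        have e1 : (B ∩ D).indicator (fun _ => c) = c • (D ∩ B).indicator (fun _ => (1:ℝ)) := by
          rw [Set.inter_comm]; exact hsmul _
        calc μ[(B ∩ D).indicator (fun _ => c)|G]
            =ᵐ[μ] c • μ[(D ∩ B).indicator (fun _ => (1:ℝ))|G] := by
              rw [e1]; exact condExp_smul c _ G
          _ =ᵐ[μ] fun ω => c * ((μ⟦D|G⟧) ω * (μ⟦B|G⟧) ω) := by
              filter_upwards [hprod hs] with ω hω
              simp only [Pi.smul_apply, smul_eq_mul]
              rw [hω]
      calc ∫ ω in A ∩ B, (s.indicator (fun _ => c)) (Y ω) ∂μ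
          = ∫ ω in A, B.indicator (D.indicator (fun _ => c)) ω ∂μ := by
            rw [setIntegral_indicator hB, hcomp]
        _ = ∫ ω in A, ((B ∩ D).indicator (fun _ => c)) ω ∂μ := by
            rw [Set.indicator_indicator]
        _ = ∫ ω in A, (μ[(B ∩ D).indicator (fun _ => c)|G]) ω ∂μ :=
            (setIntegral_condExp hG ((integrable_const c).indicator (hB.inter hD)) hA).symm
        _ = ∫ ω in A, c * ((μ⟦D|G⟧) ω * (μ⟦B|G⟧) ω) ∂μ :=
            integral_congr_ae (ae_restrict_of_ae h1)
    have rhs_eq : ∫ ω in A ∩ B, (μ[fun ω' => (s.indicator (fun _ => c)) (Y ω')|G]) ω ∂μ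
        = ∫ ω in A, c * ((μ⟦D|G⟧) ω * (μ⟦B|G⟧) ω) ∂μ := by
      have h4 : μ[fun ω' => (s.indicator (fun _ => c)) (Y ω')|G] =ᵐ[μ] c • μ⟦D|G⟧ := by
        rw [hcomp, hsmul D]; exact condExp_smul c _ G
      have hint5 : Integrable (B.indicator (c • μ⟦D|G⟧)) μ :=
        (integrable_condExp.smul c).indicator hB
      have h5 : B.indicator (c • μ⟦D|G⟧)
          = (c • μ⟦D|G⟧) * B.indicator (fun _ => (1:ℝ)) := by
        funext ω; by_cases hω : ω ∈ B <;> simp [Set.indicator_apply, hω]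
      have h6 : μ[B.indicator (c • μ⟦D|G⟧)|G]
          =ᵐ[μ] (c • μ⟦D|G⟧) * μ⟦B|G⟧ := by
        rw [h5]
        exact condExp_mul_of_stronglyMeasurable_left (stronglyMeasurable_condExp.const_smul c)
          (h5 ▸ hint5) hindB
      calc ∫ ω in A ∩ B, (μ[fun ω' => (s.indicator (fun _ => c)) (Y ω')|G]) ω ∂μ
          = ∫ ω in A ∩ B, (c • μ⟦D|G⟧) ω ∂μ := integral_congr_ae (ae_restrict_of_ae h4)
        _ = ∫ ω in A, B.indicator (c • μ⟦D|G⟧) ω ∂μ := (setIntegral_indicator hB).symm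
        _ = ∫ ω in A, (μ[B.indicator (c • μ⟦D|G⟧)|G]) ω ∂μ :=
            (setIntegral_condExp hG hint5 hA).symm
        _ = ∫ ω in A, ((c • μ⟦D|G⟧) * μ⟦B|G⟧) ω ∂μ := integral_congr_ae (ae_restrict_of_ae h6)
        _ = ∫ ω in A, c * ((μ⟦D|G⟧) ω * (μ⟦B|G⟧) ω) ∂μ := by
            congr 1; funext ω; simp [mul_assoc]
    rw [lhs_eq, rhs_eq]
  · -- additivity
    intro φ₁ φ₂ _ hint1 hint2 hP1 hP2
    have hY1 : Integrable (fun ω => φ₁ (Y ω)) μ :=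
      (integrable_map_measure hint1.aestronglyMeasurable hY.aemeasurable).mp hint1
    have hY2 : Integrable (fun ω => φ₂ (Y ω)) μ :=
      (integrable_map_measure hint2.aestronglyMeasurable hY.aemeasurable).mp hint2
    have hadd : (fun ω => (φ₁ + φ₂) (Y ω)) = (fun ω => φ₁ (Y ω)) + fun ω => φ₂ (Y ω) := rfl
    calc ∫ ω in A ∩ B, (φ₁ + φ₂) (Y ω) ∂μ
        = ∫ ω in A ∩ B, φ₁ (Y ω) ∂μ + ∫ ω in A ∩ B, φ₂ (Y ω) ∂μ := by
          rw [show (fun ω => (φ₁ + φ₂) (Y ω)) = (fun ω => φ₁ (Y ω)) + fun ω => φ₂ (Y ω) from rfl]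
          exact integral_add hY1.integrableOn hY2.integrableOn
      _ = ∫ ω in A ∩ B, (μ[fun ω' => φ₁ (Y ω')|G]) ω ∂μ
          + ∫ ω in A ∩ B, (μ[fun ω' => φ₂ (Y ω')|G]) ω ∂μ := by rw [hP1, hP2]
      _ = ∫ ω in A ∩ B, (μ[fun ω' => (φ₁ + φ₂) (Y ω')|G]) ω ∂μ := by
          rw [← integral_add integrable_condExp.integrableOn integrable_condExp.integrableOn]
          refine integral_congr_ae (ae_restrict_of_ae ?_)
          filter_upwards [condExp_add hY1 hY2 (m := G)] with ω hω
          rw [hadd, hω]; rfl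
  · -- closedness
    have hlip1 : LipschitzWith 1 (fun f : β →₁[μ.map Y] ℝ => ∫ ω in A ∩ B, f (Y ω) ∂μ) := by
      refine LipschitzWith.of_dist_le_mul fun f g => ?_
      have hf1 : Integrable (f : β → ℝ) (μ.map Y) := L1.integrable_coeFn f
      have hg1 : Integrable (g : β → ℝ) (μ.map Y) := L1.integrable_coeFn g
      have hfY : Integrable (fun ω => (f : β → ℝ) (Y ω)) μ :=
        (integrable_map_measure hf1.aestronglyMeasurable hY.aemeasurable).mp hf1
      have hgY : Integrable (fun ω => (g : β → ℝ) (Y ω)) μ :=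
        (integrable_map_measure hg1.aestronglyMeasurable hY.aemeasurable).mp hg1
      rw [NNReal.coe_one, one_mul, Real.dist_eq, L1.dist_eq_integral_dist]
      calc |∫ ω in A ∩ B, (f : β → ℝ) (Y ω) ∂μ - ∫ ω in A ∩ B, (g : β → ℝ) (Y ω) ∂μ|
          = |∫ ω in A ∩ B, ((f : β → ℝ) (Y ω) - (g : β → ℝ) (Y ω)) ∂μ| := by
            rw [integral_sub hfY.integrableOn hgY.integrableOn]
        _ ≤ ∫ ω in A ∩ B, |(f : β → ℝ) (Y ω) - (g : β → ℝ) (Y ω)| ∂μ := by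
            simpa [Real.norm_eq_abs] using
              norm_integral_le_integral_norm (μ := μ.restrict (A ∩ B))
                (f := fun ω => (f : β → ℝ) (Y ω) - (g : β → ℝ) (Y ω))
        _ ≤ ∫ ω, |(f : β → ℝ) (Y ω) - (g : β → ℝ) (Y ω)| ∂μ := by
            refine setIntegral_le_integral ((hfY.sub hgY).abs) ?_
            exact Filter.Eventually.of_forall fun ω => abs_nonneg _
        _ = ∫ y, |(f : β → ℝ) y - (g : β → ℝ) y| ∂(μ.map Y) := by
            rw [integral_map hY.aemeasurable]
            exact ((hf1.sub hg1).norm).aestronglyMeasurable.congr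
              (Filter.Eventually.of_forall fun y => by simp [Real.norm_eq_abs])
        _ = ∫ y, dist ((f : β → ℝ) y) ((g : β → ℝ) y) ∂(μ.map Y) := by
            simp [Real.dist_eq]
    have hlip2 : LipschitzWith 1
        (fun f : β →₁[μ.map Y] ℝ => ∫ ω in A ∩ B, (μ[fun ω' => (f : β → ℝ) (Y ω')|G]) ω ∂μ) := by
      refine LipschitzWith.of_dist_le_mul fun f g => ?_
      have hf1 : Integrable (f : β → ℝ) (μ.map Y) := L1.integrable_coeFn f
      have hg1 : Integrable (g : β → ℝ) (μ.map Y) := L1.integrable_coeFn g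
      have hfY : Integrable (fun ω => (f : β → ℝ) (Y ω)) μ :=
        (integrable_map_measure hf1.aestronglyMeasurable hY.aemeasurable).mp hf1
      have hgY : Integrable (fun ω => (g : β → ℝ) (Y ω)) μ :=
        (integrable_map_measure hg1.aestronglyMeasurable hY.aemeasurable).mp hg1
      rw [NNReal.coe_one, one_mul, Real.dist_eq, L1.dist_eq_integral_dist]
      calc |∫ ω in A ∩ B, (μ[fun ω' => (f : β → ℝ) (Y ω')|G]) ω ∂μ
            - ∫ ω in A ∩ B, (μ[fun ω' => (g : β → ℝ) (Y ω')|G]) ω ∂μ|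
          = |∫ ω in A ∩ B, ((μ[fun ω' => (f : β → ℝ) (Y ω')|G]) ω
              - (μ[fun ω' => (g : β → ℝ) (Y ω')|G]) ω) ∂μ| := by
            rw [integral_sub integrable_condExp.integrableOn integrable_condExp.integrableOn]
        _ ≤ ∫ ω in A ∩ B, |(μ[fun ω' => (f : β → ℝ) (Y ω')|G]) ω
              - (μ[fun ω' => (g : β → ℝ) (Y ω')|G]) ω| ∂μ := by
            simpa [Real.norm_eq_abs] using
              norm_integral_le_integral_norm (μ := μ.restrict (A ∩ B))
                (f := fun ω => (μ[fun ω' => (f : β → ℝ) (Y ω')|G]) ω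
                  - (μ[fun ω' => (g : β → ℝ) (Y ω')|G]) ω)
        _ ≤ ∫ ω, |(μ[fun ω' => (f : β → ℝ) (Y ω')|G]) ω
              - (μ[fun ω' => (g : β → ℝ) (Y ω')|G]) ω| ∂μ := by
            refine setIntegral_le_integral ((integrable_condExp.sub integrable_condExp).abs) ?_
            exact Filter.Eventually.of_forall fun ω => abs_nonneg _
        _ = ∫ ω, |(μ[(fun ω' => (f : β → ℝ) (Y ω')) - fun ω' => (g : β → ℝ) (Y ω')|G]) ω| ∂μ := by
            refine integral_congr_ae ?_
            filter_upwards [condExp_sub hfY hgY (m := G)] with ω hω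
            rw [hω]; rfl
        _ ≤ ∫ ω, |(f : β → ℝ) (Y ω) - (g : β → ℝ) (Y ω)| ∂μ := by
            simpa using integral_abs_condExp_le
              (m := G) (μ := μ) ((fun ω' => (f : β → ℝ) (Y ω')) - fun ω' => (g : β → ℝ) (Y ω'))
        _ = ∫ y, |(f : β → ℝ) y - (g : β → ℝ) y| ∂(μ.map Y) := by
            rw [integral_map hY.aemeasurable]
            exact ((hf1.sub hg1).norm).aestronglyMeasurable.congr
              (Filter.Eventually.of_forall fun y => by simp [Real.norm_eq_abs])
        _ = ∫ y, dist ((f : β → ℝ) y) ((g : β → ℝ) y) ∂(μ.map Y) := by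
            simp [Real.dist_eq]
    exact isClosed_eq hlip1.continuous hlip2.continuous
  · -- ae congruence
    intro φ₁ φ₂ hae _ hP1
    have haeY : (fun ω => φ₁ (Y ω)) =ᵐ[μ] fun ω => φ₂ (Y ω) :=
      ae_of_ae_map hY.aemeasurable hae
    calc ∫ ω in A ∩ B, φ₂ (Y ω) ∂μ
        = ∫ ω in A ∩ B, φ₁ (Y ω) ∂μ := (integral_congr_ae (ae_restrict_of_ae haeY)).symm
      _ = ∫ ω in A ∩ B, (μ[fun ω' => φ₁ (Y ω')|G]) ω ∂μ := hP1
      _ = ∫ ω in A ∩ B, (μ[fun ω' => φ₂ (Y ω')|G]) ω ∂μ :=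
          integral_congr_ae (ae_restrict_of_ae (condExp_congr_ae haeY))


lemma aux_condExp_sup (hG : G ≤ F) (hC : Measurable C) (hY : Measurable Y)
    (hCI : CondIndepFun G hG Y C μ) {φ : β → ℝ} (hφ : Measurable φ)
    (hint : Integrable (fun ω => φ (Y ω)) μ) :
    μ[(fun ω => φ (Y ω))|G ⊔ MeasurableSpace.comap C inferInstance]
      =ᵐ[μ] μ[(fun ω => φ (Y ω))|G] := by
  haveI : SigmaFinite (μ.trim hG) := inferInstance
  have hH_le : G ⊔ MeasurableSpace.comap C inferInstance ≤ F := sup_le hG hC.comap_le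
  haveI : SigmaFinite (μ.trim hH_le) := inferInstance
  have hφν : Integrable φ (Measure.map Y μ) :=
    (integrable_map_measure hφ.aestronglyMeasurable hY.aemeasurable).mpr hint
  set π : Set (Set Ω) :=
    {u | ∃ A t', MeasurableSet[G] A ∧ MeasurableSet t' ∧ u = A ∩ C ⁻¹' t'} with hπdef
  have h_eq : (G ⊔ MeasurableSpace.comap C inferInstance) = MeasurableSpace.generateFrom π := by
    refine le_antisymm (sup_le ?_ ?_) (MeasurableSpace.generateFrom_le ?_)
    · intro A hA
      exact MeasurableSpace.measurableSet_generateFrom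
        ⟨A, Set.univ, hA, MeasurableSet.univ, by simp⟩
    · rintro u ⟨t', ht', rfl⟩
      exact MeasurableSpace.measurableSet_generateFrom
        ⟨Set.univ, t', MeasurableSet.univ, ht', by simp⟩
    · rintro u ⟨A, t', hA, ht', rfl⟩
      exact MeasurableSet.inter ((le_sup_left : G ≤ _) A hA)
        ((le_sup_right : MeasurableSpace.comap C inferInstance ≤ _) _ ⟨t', ht', rfl⟩)
  have h_inter : IsPiSystem π := by
    rintro u ⟨A₁, t₁, hA₁, ht₁, rfl⟩ v ⟨A₂, t₂, hA₂, ht₂, rfl⟩ _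
    exact ⟨A₁ ∩ A₂, t₁ ∩ t₂, hA₁.inter hA₂, ht₁.inter ht₂, by
      rw [Set.preimage_inter]; exact Set.inter_inter_inter_comm _ _ _ _⟩
  have key : ∀ ⦃u : Set Ω⦄, MeasurableSet[G ⊔ MeasurableSpace.comap C inferInstance] u →
      ∫ ω in u, φ (Y ω) ∂μ = ∫ ω in u, (μ[fun ω' => φ (Y ω')|G]) ω ∂μ := by
    refine MeasurableSpace.induction_on_inter
      (m := G ⊔ MeasurableSpace.comap C inferInstance)
      (C := fun u _ => ∫ ω in u, φ (Y ω) ∂μ = ∫ ω in u, (μ[fun ω' => φ (Y ω')|G]) ω ∂μ)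
      h_eq h_inter (by simp) ?_ ?_ ?_
    · rintro u ⟨A, t', hA, ht', rfl⟩
      exact aux_setIntegral_base hG hC hY hCI hA ht' hφν
    · intro u hu_meas hu
      have huF : MeasurableSet u := hH_le _ hu_meas
      have h1 := integral_add_compl huF hint
      have h2 := integral_add_compl huF (integrable_condExp
        (f := fun ω' => φ (Y ω')) (m := G) (μ := μ))
      have h3 : ∫ ω, φ (Y ω) ∂μ = ∫ ω, (μ[fun ω' => φ (Y ω')|G]) ω ∂μ :=
        (integral_condExp hG).symm
      linarith
    · intro g hdisj hmeas hP
      have hmF : ∀ i, MeasurableSet (g i) := fun i => hH_le _ (hmeas i)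
      rw [integral_iUnion hmF hdisj hint.integrableOn,
        integral_iUnion hmF hdisj integrable_condExp.integrableOn]
      exact tsum_congr hP
  refine (ae_eq_condExp_of_forall_setIntegral_eq hH_le hint
    (fun s _ _ => integrable_condExp.integrableOn) (fun s hs _ => (key hs).symm) ?_).symm
  exact ((stronglyMeasurable_condExp (f := fun ω => φ (Y ω)) (m := G) (μ := μ)).mono (le_sup_left : G ≤ G ⊔ MeasurableSpace.comap C inferInstance)).aestronglyMeasurable


lemma aux_integral_mul_eq (hG : G ≤ F) (hC : Measurable C) (hY : Measurable Y)
    (hCI : CondIndepFun G hG Y C μ) {φ : β → ℝ} (hφ : Measurable φ)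
    (hint : Integrable (fun ω => φ (Y ω)) μ)
    {Δ' : Ω → ℝ} (hΔ' : Measurable[G ⊔ MeasurableSpace.comap C inferInstance] Δ')
    {Cb : ℝ} (hbdd : ∀ ω, |Δ' ω| ≤ Cb) :
    ∫ ω, Δ' ω * φ (Y ω) ∂μ = ∫ ω, Δ' ω * (μ[fun ω' => φ (Y ω')|G]) ω ∂μ := by
  have hH_le : G ⊔ MeasurableSpace.comap C inferInstance ≤ F := sup_le hG hC.comap_le
  haveI : SigmaFinite (μ.trim hH_le) := inferInstance
  have hΔF : Measurable Δ' := hΔ'.mono hH_le le_rfl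
  have hb : ∃ Cb', ∀ ω, ‖Δ' ω‖ ≤ Cb' := ⟨Cb, fun ω => by
    simpa [Real.norm_eq_abs] using hbdd ω⟩
  have h1 : Integrable (fun ω => Δ' ω * φ (Y ω)) μ :=
    hint.bdd_mul hΔF.aestronglyMeasurable (Filter.Eventually.of_forall hb.choose_spec)
  calc ∫ ω, Δ' ω * φ (Y ω) ∂μ
      = ∫ ω, (μ[(fun ω' => Δ' ω' * φ (Y ω'))|G ⊔ MeasurableSpace.comap C inferInstance]) ω ∂μ :=
        (integral_condExp hH_le).symm
    _ = ∫ ω, Δ' ω * (μ[(fun ω' => φ (Y ω'))|G ⊔ MeasurableSpace.comap C inferInstance]) ω ∂μ := by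
        refine integral_congr_ae ?_
        have := condExp_mul_of_stronglyMeasurable_left (m := G ⊔ MeasurableSpace.comap C inferInstance)
          (μ := μ) hΔ'.stronglyMeasurable (g := fun ω => φ (Y ω)) h1 hint
        filter_upwards [this] with ω hω
        exact hω
    _ = ∫ ω, Δ' ω * (μ[(fun ω' => φ (Y ω'))|G]) ω ∂μ := by
        refine integral_congr_ae ?_
        filter_upwards [aux_condExp_sup hG hC hY hCI hφ hint] with ω hω
        rw [hω]

end Aux

/-- on a standard Borel probability space, if `σ(Y)` and `σ(C)` are
conditionally independent given `G`, each component of `Y : Ω → ℝᵐ` and `‖Y‖²` are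
integrable, `ζ` is a bounded `G`-measurable random vector, and `Δ` is a bounded
`H`-measurable random variable with `H = G ⊔ σ(C)`, then
`E[Δ (½{‖Y‖² - E[‖Y‖²|G]} - ⟨ζ, Y - E[Y|G]⟩)] = 0`. -/
theorem stmt13 {Ω E : Type*} (G : MeasurableSpace Ω) (H : MeasurableSpace Ω) [F : MeasurableSpace Ω] [StandardBorelSpace Ω]
    [MeasurableSpace E]
    (μ : Measure Ω) [IsProbabilityMeasure μ]
    (hG : G ≤ F)
    (C : Ω → E) (hC : Measurable C)
    (hH : H = G ⊔ MeasurableSpace.comap C inferInstance)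
    (m : ℕ)
    (Y : Ω → (Fin m → ℝ)) (hYmeas : Measurable Y)
    (hYint : ∀ j, Integrable (fun ω => Y ω j) μ)
    (hYsqint : Integrable (fun ω => Y ω ⬝ᵥ Y ω) μ)
    (hCI : CondIndepFun G hG Y C μ)
    (ζ : Ω → (Fin m → ℝ))
    (hζmeas : ∀ j, Measurable[G] fun ω => ζ ω j)
    (hζbdd : ∃ Cb : ℝ, ∀ ω j, |ζ ω j| ≤ Cb)
    (Δ : Ω → ℝ) (hΔmeas : Measurable[H] Δ)
    (hΔbdd : ∃ Cb : ℝ, ∀ ω, |Δ ω| ≤ Cb) :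
    ∫ ω, Δ ω * ((1 / 2) * (Y ω ⬝ᵥ Y ω - (μ[(fun ω' => Y ω' ⬝ᵥ Y ω') | G]) ω)
        - ζ ω ⬝ᵥ (Y ω - fun j => (μ[(fun ω' => Y ω' j) | G]) ω)) ∂μ = 0 := by
  obtain ⟨Cζ, hCζ⟩ := hζbdd
  obtain ⟨CΔ, hCΔ⟩ := hΔbdd
  have hCF : Measurable[F] C := hC
  have hH_le : H ≤ F := hH ▸ sup_le hG hCF.comap_le
  have hYF : Measurable[F] Y := hYmeas
  have hΔH : Measurable[G ⊔ MeasurableSpace.comap C inferInstance] Δ := hH ▸ hΔmeas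
  have hΔF : Measurable[F] Δ := hΔmeas.mono hH_le le_rfl
  have hφQ : Measurable (fun v : Fin m → ℝ => v ⬝ᵥ v) :=
    Finset.univ.measurable_sum fun j _ => (measurable_pi_apply j).mul (measurable_pi_apply j)
  -- the four integrable pieces
  have hbΔ : ∃ Cb', ∀ ω, ‖Δ ω‖ ≤ Cb' := ⟨CΔ, fun ω => by
    simpa [Real.norm_eq_abs] using hCΔ ω⟩
  have hΔQ : Integrable (fun ω => Δ ω * (Y ω ⬝ᵥ Y ω)) μ :=
    hYsqint.bdd_mul hΔF.aestronglyMeasurable (Filter.Eventually.of_forall hbΔ.choose_spec)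
  have hΔEQ : Integrable (fun ω => Δ ω * (μ[(fun ω' => Y ω' ⬝ᵥ Y ω') | G]) ω) μ :=
    integrable_condExp.bdd_mul hΔF.aestronglyMeasurable (Filter.Eventually.of_forall hbΔ.choose_spec)
  have hmj : ∀ j, Measurable[F] (fun ω => Δ ω * ζ ω j) :=
    fun j => hΔF.mul ((hζmeas j).mono hG le_rfl)
  have hbj : ∀ j, ∀ ω, ‖Δ ω * ζ ω j‖ ≤ CΔ * Cζ := by
    intro j ω
    rw [Real.norm_eq_abs, abs_mul]
    exact mul_le_mul (hCΔ ω) (hCζ ω j) (abs_nonneg _) ((abs_nonneg _).trans (hCΔ ω))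
  have hjY : ∀ j, Integrable (fun ω => Δ ω * ζ ω j * Y ω j) μ :=
    fun j => (hYint j).bdd_mul (hmj j).aestronglyMeasurable (Filter.Eventually.of_forall (hbj j))
  have hjE : ∀ j, Integrable (fun ω => Δ ω * ζ ω j * (μ[(fun ω' => Y ω' j) | G]) ω) μ :=
    fun j => integrable_condExp.bdd_mul (hmj j).aestronglyMeasurable (Filter.Eventually.of_forall (hbj j))
  -- key identities
  have hQkey : ∫ ω, Δ ω * (Y ω ⬝ᵥ Y ω) ∂μ
      = ∫ ω, Δ ω * (μ[(fun ω' => Y ω' ⬝ᵥ Y ω') | G]) ω ∂μ :=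
    aux_integral_mul_eq (F := F) hG hCF hYF hCI hφQ hYsqint hΔH hCΔ
  have hjkey : ∀ j, ∫ ω, Δ ω * ζ ω j * Y ω j ∂μ
      = ∫ ω, Δ ω * ζ ω j * (μ[(fun ω' => Y ω' j) | G]) ω ∂μ := by
    intro j
    have hmeasj : Measurable[G ⊔ MeasurableSpace.comap C inferInstance]
        (fun ω => Δ ω * ζ ω j) := hΔH.mul ((hζmeas j).mono le_sup_left le_rfl)
    have hbdd' : ∀ ω, |Δ ω * ζ ω j| ≤ CΔ * Cζ := fun ω => by
      simpa only [Real.norm_eq_abs] using hbj j ω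
    exact aux_integral_mul_eq (F := F) hG hCF hYF hCI (measurable_pi_apply j) (hYint j) hmeasj hbdd'
  -- expand the integrand
  have hexp : ∀ ω, Δ ω * ((1 / 2) * (Y ω ⬝ᵥ Y ω - (μ[(fun ω' => Y ω' ⬝ᵥ Y ω') | G]) ω)
        - ζ ω ⬝ᵥ (Y ω - fun j => (μ[(fun ω' => Y ω' j) | G]) ω))
      = ((1 / 2) * (Δ ω * (Y ω ⬝ᵥ Y ω))
          - (1 / 2) * (Δ ω * (μ[(fun ω' => Y ω' ⬝ᵥ Y ω') | G]) ω))
        - ∑ j, (Δ ω * ζ ω j * Y ω j - Δ ω * ζ ω j * (μ[(fun ω' => Y ω' j) | G]) ω) := by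
    intro ω
    have h1 : ζ ω ⬝ᵥ (Y ω - fun j => (μ[(fun ω' => Y ω' j) | G]) ω)
        = ∑ j, (ζ ω j * Y ω j - ζ ω j * (μ[(fun ω' => Y ω' j) | G]) ω) := by
      refine Finset.sum_congr rfl fun j _ => ?_
      simp [Pi.sub_apply, mul_sub]
    rw [h1, mul_sub, Finset.mul_sum]
    have h3 : ∑ j, Δ ω * (ζ ω j * Y ω j - ζ ω j * (μ[(fun ω' => Y ω' j) | G]) ω)
        = ∑ j, (Δ ω * ζ ω j * Y ω j - Δ ω * ζ ω j * (μ[(fun ω' => Y ω' j) | G]) ω) :=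
      Finset.sum_congr rfl fun j _ => by ring
    rw [h3]
    ring
  have hg1int : Integrable (fun ω => (1 / 2) * (Δ ω * (Y ω ⬝ᵥ Y ω))
      - (1 / 2) * (Δ ω * (μ[(fun ω' => Y ω' ⬝ᵥ Y ω') | G]) ω)) μ :=
    (hΔQ.const_mul _).sub (hΔEQ.const_mul _)
  have hg2int : Integrable (fun ω => ∑ j, (Δ ω * ζ ω j * Y ω j
      - Δ ω * ζ ω j * (μ[(fun ω' => Y ω' j) | G]) ω)) μ :=
    integrable_finset_sum _ fun j _ => (hjY j).sub (hjE j)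
  calc ∫ ω, Δ ω * ((1 / 2) * (Y ω ⬝ᵥ Y ω - (μ[(fun ω' => Y ω' ⬝ᵥ Y ω') | G]) ω)
        - ζ ω ⬝ᵥ (Y ω - fun j => (μ[(fun ω' => Y ω' j) | G]) ω)) ∂μ
      = ∫ ω, (((1 / 2) * (Δ ω * (Y ω ⬝ᵥ Y ω))
          - (1 / 2) * (Δ ω * (μ[(fun ω' => Y ω' ⬝ᵥ Y ω') | G]) ω))
        - ∑ j, (Δ ω * ζ ω j * Y ω j
          - Δ ω * ζ ω j * (μ[(fun ω' => Y ω' j) | G]) ω)) ∂μ :=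
        integral_congr_ae (Filter.Eventually.of_forall hexp)
    _ = (∫ ω, ((1 / 2) * (Δ ω * (Y ω ⬝ᵥ Y ω))
          - (1 / 2) * (Δ ω * (μ[(fun ω' => Y ω' ⬝ᵥ Y ω') | G]) ω)) ∂μ)
        - ∫ ω, (∑ j, (Δ ω * ζ ω j * Y ω j
          - Δ ω * ζ ω j * (μ[(fun ω' => Y ω' j) | G]) ω)) ∂μ :=
        integral_sub hg1int hg2int
    _ = 0 := by
        have e1 : ∫ ω, ((1 / 2) * (Δ ω * (Y ω ⬝ᵥ Y ω))
            - (1 / 2) * (Δ ω * (μ[(fun ω' => Y ω' ⬝ᵥ Y ω') | G]) ω)) ∂μ = 0 := by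
          rw [integral_sub (hΔQ.const_mul _) (hΔEQ.const_mul _), integral_const_mul,
            integral_const_mul, hQkey, sub_self]
        have e2 : ∫ ω, (∑ j, (Δ ω * ζ ω j * Y ω j
            - Δ ω * ζ ω j * (μ[(fun ω' => Y ω' j) | G]) ω)) ∂μ = 0 := by
          have h : ∫ ω, (∑ j, (Δ ω * ζ ω j * Y ω j
              - Δ ω * ζ ω j * (μ[(fun ω' => Y ω' j) | G]) ω)) ∂μ
              = ∑ j, ∫ ω, (Δ ω * ζ ω j * Y ω j
              - Δ ω * ζ ω j * (μ[(fun ω' => Y ω' j) | G]) ω) ∂μ :=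
            integral_finset_sum _ fun j _ => (hjY j).sub (hjE j)
          rw [h]
          refine Finset.sum_eq_zero fun j _ => ?_
          rw [integral_sub (hjY j) (hjE j), hjkey j, sub_self]
        rw [e1, e2, sub_zero]
end
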